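/- For a finite tree A with b-coloring (B, R, G), every maximum matching of A contains all edges of R and, for each vertex b of B, exactly one edge joining b to a vertex of G, and no other edges; hence every maximum matching of A has cardinality |B| + |R|. -/

import Mathlib

variable {V : Type*} [Fintype V] [DecidableEq V]

/-- `C` is a vertex cover of `A`. -/
def IsVC (A : SimpleGraph V) (C : Set V) : Prop :=
  ∀ e ∈ A.edgeSet, ∃ v ∈ C, v ∈ e

/-- `C` is a minimum vertex cover of `A`. -/
def IsMinVC (A : SimpleGraph V) (C : Set V) : Prop :=
  IsVC A C ∧ ∀ D : Set V, IsVC A D → C.ncard ≤ D.ncard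

/-- `M` is a matching of `A`: a set of edges, pairwise non-adjacent. -/
def IsMatch (A : SimpleGraph V) (M : Set (Sym2 V)) : Prop :=
  M ⊆ A.edgeSet ∧ ∀ e ∈ M, ∀ f ∈ M, e ≠ f → ∀ v : V, ¬(v ∈ e ∧ v ∈ f)

/-- `M` is a maximum matching of `A`. -/
def IsMaxMatch (A : SimpleGraph V) (M : Set (Sym2 V)) : Prop :=
  IsMatch A M ∧ ∀ N : Set (Sym2 V), IsMatch A N → N.ncard ≤ M.ncard

/-- endpoints of a set of edges -/
def Rsupp (R : Set (Sym2 V)) : Set V := {v | ∃ e ∈ R, v ∈ e}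

/-- the tricoloring conditions (iii) of the paper -/
def IsBColoring (A : SimpleGraph V) (B : Set V) (R : Set (Sym2 V)) (G : Set V) : Prop :=
  R ⊆ A.edgeSet ∧
  B ∪ G ∪ Rsupp R = Set.univ ∧
  Disjoint B G ∧ Disjoint B (Rsupp R) ∧ Disjoint G (Rsupp R) ∧
  (∀ e ∈ R, ∀ f ∈ R, e ≠ f → ∀ v : V, ¬(v ∈ e ∧ v ∈ f)) ∧
  (∀ v w : V, A.Adj v w → v ∈ G → w ∈ B) ∧
  (∀ b ∈ B, 2 ≤ (A.neighborSet b ∩ G).ncard)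

/-- positive vertex-cover backbone -/
def PosBB (A : SimpleGraph V) : Set V := {v | ∀ C : Set V, IsMinVC A C → v ∈ C}

/-- negative vertex-cover backbone -/
def NegBB (A : SimpleGraph V) : Set V := {v | ∀ C : Set V, IsMinVC A C → v ∉ C}

/-- degenerate vertex -/
def Degen (A : SimpleGraph V) (v : V) : Prop :=
  (∃ C : Set V, IsMinVC A C ∧ v ∈ C) ∧ (∃ C : Set V, IsMinVC A C ∧ v ∉ C)

/-- exclusive edge -/
def Exclusive (A : SimpleGraph V) (e : Sym2 V) : Prop :=
  e ∈ A.edgeSet ∧ (∀ v ∈ e, Degen A v) ∧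
  ∀ C : Set V, IsMinVC A C → ∃ v ∈ e, v ∉ C

/-!
Split the edges of a matching `M` into those meeting `B` and the rest. At most `|B|` edges meet
`B`, and an edge avoiding `B` avoids `G` too (the neighbours of `G` lie in `B`), so it joins two
vertices of `Rsupp R`; hence at most `|R|` edges avoid `B`, and `|M| ≤ |B| + |R|`.

In a forest the bound is attained. A set `S ⊆ B` spans at least `2|S|` edges to its
`G`-neighbourhood `N`, and a forest on `S ∪ N` has fewer than `|S| + |N|` edges, so `|S| < |N|`.
Hall's theorem then matches `B` into `G`, and together with `R` this gives a matching of size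
`|B| + |R|`. For a maximum matching both halves of the count are therefore tight: every vertex of
`B` is matched into `G`, and the edges avoiding `B` form a perfect matching of `Rsupp R`. Two
perfect matchings of the same vertex set in a forest coincide, since the edges in which they differ
would be as many as the vertices they cover.
-/

section

-- a fresh `V`, so that the lemmas below do not pick up `[Fintype V] [DecidableEq V]`
variable {V : Type*} {A : SimpleGraph V} {M N : Set (Sym2 V)} {B G : Set V} {R : Set (Sym2 V)}

theorem IsMatch.eq_of_mem_of_mem (hM : IsMatch A M) {e f : Sym2 V} {v : V}
    (he : e ∈ M) (hf : f ∈ M) (hve : v ∈ e) (hvf : v ∈ f) : e = f :=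
  by_contra fun hne => hM.2 e he f hf hne v ⟨hve, hvf⟩

theorem IsMatch.mono (hM : IsMatch A M) (hNM : N ⊆ M) : IsMatch A N :=
  ⟨hNM.trans hM.1, fun e he f hf => hM.2 e (hNM he) f (hNM hf)⟩

theorem disjoint_of_disjoint_rsupp (h : Disjoint (Rsupp M) (Rsupp N)) : Disjoint M N :=
  Set.disjoint_left.2 fun e he he' =>
    h.ne_of_mem ⟨e, he, e.out_fst_mem⟩ ⟨e, he', e.out_fst_mem⟩ rfl

theorem IsMatch.union (hM : IsMatch A M) (hN : IsMatch A N)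
    (h : Disjoint (Rsupp M) (Rsupp N)) : IsMatch A (M ∪ N) := by
  refine ⟨Set.union_subset hM.1 hN.1, ?_⟩
  rintro e (he | he) f (hf | hf) hne v ⟨hve, hvf⟩
  · exact hM.2 e he f hf hne v ⟨hve, hvf⟩
  · exact h.ne_of_mem ⟨e, he, hve⟩ ⟨f, hf, hvf⟩ rfl
  · exact h.ne_of_mem ⟨f, hf, hvf⟩ ⟨e, he, hve⟩ rfl
  · exact hN.2 e he f hf hne v ⟨hve, hvf⟩

theorem IsMatch.rsupp_sdiff_subset (hM : IsMatch A M) (h : Rsupp M ⊆ Rsupp N) :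
    Rsupp (M \ N) ⊆ Rsupp (N \ M) := by
  rintro v ⟨e, ⟨heM, heN⟩, hve⟩
  obtain ⟨f, hfN, hvf⟩ := h ⟨e, heM, hve⟩
  refine ⟨f, ⟨hfN, fun hfM => heN ?_⟩, hvf⟩
  rwa [hM.eq_of_mem_of_mem heM hfM hve hvf]

theorem IsMatch.ncard_rsupp [Finite V] (hM : IsMatch A M) : (Rsupp M).ncard = 2 * M.ncard := by
  have hU : Rsupp M = ⋃ e ∈ M, {v | v ∈ e} := by ext; simp [Rsupp]
  have h2 : ∀ e ∈ M, {v | v ∈ e}.ncard = 2 := by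
    intro e he
    induction e using Sym2.ind with | h x y =>
    rw [show {v | v ∈ s(x, y)} = {x, y} by ext; simp, Set.ncard_pair (hM.1 he).ne]
  rw [hU, M.toFinite.ncard_biUnion (fun _ _ => Set.toFinite _), finsum_mem_congr rfl h2,
    finsum_mem_eq_finite_toFinset_sum _ M.toFinite, Finset.sum_const, smul_eq_mul,
    Set.ncard_eq_toFinset_card _ M.toFinite, mul_comm]
  intro e he f hf hne
  exact Set.disjoint_left.2 fun v hve hvf => hM.2 e he f hf hne v ⟨hve, hvf⟩

def edgesMeeting (M : Set (Sym2 V)) (B : Set V) : Set (Sym2 V) := {e ∈ M | ∃ v ∈ B, v ∈ e}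

theorem ncard_sdiff_edgesMeeting_add [Finite V] (M : Set (Sym2 V)) (B : Set V) :
    (M \ edgesMeeting M B).ncard + (edgesMeeting M B).ncard = M.ncard :=
  Set.ncard_sdiff_add_ncard_of_subset (Set.sep_subset _ _)

theorem IsMatch.ncard_edgesMeeting_le [Finite V] (hM : IsMatch A M) (B : Set V) :
    (edgesMeeting M B).ncard ≤ B.ncard := by
  rcases (edgesMeeting M B).eq_empty_or_nonempty with hE | ⟨-, -, v, -⟩
  · simp [hE]
  have : Nonempty V := ⟨v⟩
  choose! β hβB hβe using fun e (he : e ∈ edgesMeeting M B) => he.2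
  exact Set.ncard_le_ncard_of_injOn β hβB
    fun e he f hf h => hM.eq_of_mem_of_mem he.1 hf.1 (hβe e he) (h ▸ hβe f hf)

theorem IsMatch.exists_mem_of_ncard_le_ncard_edgesMeeting [Finite V] (hM : IsMatch A M)
    (h : B.ncard ≤ (edgesMeeting M B).ncard) {b : V} (hb : b ∈ B) :
    ∃ e ∈ M, b ∈ e ∧ ∀ w ∈ e, w ∈ B → w = b := by
  by_contra! hcon
  -- otherwise `B \ {b}` would meet as many edges of `M` as `B` does
  have hsub : edgesMeeting M B ⊆ edgesMeeting M (B \ {b}) := by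
    rintro e ⟨he, v, hv, hve⟩
    by_cases hvb : v = b
    · obtain ⟨w, hwe, hwB, hwb⟩ := hcon e he (hvb ▸ hve)
      exact ⟨he, w, ⟨hwB, hwb⟩, hwe⟩
    · exact ⟨he, v, ⟨hv, hvb⟩, hve⟩
  have hle := (Set.ncard_le_ncard hsub).trans (hM.ncard_edgesMeeting_le _)
  rw [Set.ncard_sdiff_singleton_of_mem hb] at hle
  have := (Set.ncard_pos (Set.toFinite B)).2 ⟨b, hb⟩
  omega

theorem SimpleGraph.IsAcyclic.ncard_lt_ncard_of_subset_edgeSet [Finite V] (hA : A.IsAcyclic)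
    {E : Set (Sym2 V)} (hE : E ⊆ A.edgeSet) {S : Set V} (hS : S.Nonempty)
    (hES : ∀ e ∈ E, ∀ v ∈ e, v ∈ S) : E.ncard < S.ncard := by
  have : Nonempty S := hS.to_subtype
  obtain ⟨T, hle, -, hT⟩ :=
    SimpleGraph.connected_top.exists_isTree_le_of_le_of_isAcyclic le_top (hA.induce S)
  have hEimg : E ⊆ Sym2.map Subtype.val '' (A.induce S).edgeSet := by
    intro e he
    induction e using Sym2.ind with | h x y =>
    exact ⟨s(⟨x, hES _ he x (Sym2.mem_mk_left _ _)⟩,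
      ⟨y, hES _ he y (Sym2.mem_mk_right _ _)⟩), hE he, rfl⟩
  have hcard := (SimpleGraph.isTree_iff_connected_and_card.1 hT).2
  rw [Nat.card_coe_set_eq, Nat.card_coe_set_eq] at hcard
  calc E.ncard ≤ (A.induce S).edgeSet.ncard :=
        (Set.ncard_le_ncard hEimg).trans (Set.ncard_image_le (Set.toFinite _))
    _ ≤ T.edgeSet.ncard := Set.ncard_le_ncard (SimpleGraph.edgeSet_mono hle)
    _ < S.ncard := by omega

theorem SimpleGraph.IsAcyclic.eq_of_rsupp_eq [Finite V] (hA : A.IsAcyclic) (hM : IsMatch A M)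
    (hN : IsMatch A N) (h : Rsupp M = Rsupp N) : M = N := by
  set T := Rsupp (M \ N)
  have hT : Rsupp (N \ M) = T :=
    (hN.rsupp_sdiff_subset h.ge).antisymm (hM.rsupp_sdiff_subset h.le)
  have hMN : T.ncard = 2 * (M \ N).ncard := (hM.mono Set.sdiff_subset).ncard_rsupp
  have hNM : T.ncard = 2 * (N \ M).ncard := hT ▸ (hN.mono Set.sdiff_subset).ncard_rsupp
  have hT0 : T.ncard = 0 := by
    by_contra hne
    have hlt := hA.ncard_lt_ncard_of_subset_edgeSet (E := (M \ N) ∪ (N \ M))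
      (Set.union_subset (Set.sdiff_subset.trans hM.1) (Set.sdiff_subset.trans hN.1))
      (Set.nonempty_of_ncard_ne_zero hne) (by
        rintro e (he | he) v hv
        exacts [⟨e, he, hv⟩, hT ▸ ⟨e, he, hv⟩])
    rw [Set.ncard_union_eq disjoint_sdiff_sdiff] at hlt
    omega
  have hMN0 : M \ N = ∅ := (Set.ncard_eq_zero (Set.toFinite _)).1 (by omega)
  have hNM0 : N \ M = ∅ := (Set.ncard_eq_zero (Set.toFinite _)).1 (by omega)
  exact (Set.sdiff_eq_empty.1 hMN0).antisymm (Set.sdiff_eq_empty.1 hNM0)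

theorem SimpleGraph.IsAcyclic.ncard_lt_ncard_biUnion_neighborSet_inter [Finite V]
    (hA : A.IsAcyclic) (hBG : Disjoint B G)
    (hdeg : ∀ b ∈ B, 2 ≤ (A.neighborSet b ∩ G).ncard) (hB : B.Nonempty) :
    B.ncard < (⋃ b ∈ B, A.neighborSet b ∩ G).ncard := by
  choose! g₁ hg₁ g₂ hg₂ hne using fun b hb =>
    (Set.one_lt_ncard (Set.toFinite _)).1 (hdeg b hb)
  set N := ⋃ b ∈ B, A.neighborSet b ∩ G
  have hmk : ∀ {b b' g g' : V}, b ∈ B → g' ∈ G → s(b, g) = s(b', g') →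
      b = b' ∧ g = g' := by
    intro b b' g g' hb hg' h
    rcases Sym2.eq_iff.1 h with h | ⟨rfl, -⟩
    exacts [h, (hBG.ne_of_mem hb hg' rfl).elim]
  have hinj : ∀ g : V → V, (∀ b ∈ B, g b ∈ G) → Set.InjOn (fun b => s(b, g b)) B :=
    fun g hg b hb b' hb' h => (hmk hb (hg b' hb') h).1
  set E := (fun b => s(b, g₁ b)) '' B ∪ (fun b => s(b, g₂ b)) '' B
  have hE : E.ncard = 2 * B.ncard := by
    rw [Set.ncard_union_eq, (hinj g₁ fun b hb => (hg₁ b hb).2).ncard_image,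
      (hinj g₂ fun b hb => (hg₂ b hb).2).ncard_image, two_mul]
    rw [Set.disjoint_left]
    rintro _ ⟨b, hb, rfl⟩ ⟨b', hb', h⟩
    obtain ⟨hbb, h⟩ := hmk hb' (hg₁ b hb).2 h
    exact hne b hb (hbb ▸ h).symm
  have hlt : E.ncard < (B ∪ N).ncard := hA.ncard_lt_ncard_of_subset_edgeSet
    (by rintro _ (⟨b, hb, rfl⟩ | ⟨b, hb, rfl⟩); exacts [(hg₁ b hb).1, (hg₂ b hb).1])
    (hB.mono Set.subset_union_left) (by
      rintro _ (⟨b, hb, rfl⟩ | ⟨b, hb, rfl⟩) v hv <;>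
        rcases Sym2.mem_iff.1 hv with rfl | rfl
      exacts [Or.inl hb, Or.inr (Set.mem_biUnion hb (hg₁ b hb)), Or.inl hb,
        Or.inr (Set.mem_biUnion hb (hg₂ b hb))])
  have := Set.ncard_union_le B N
  omega

theorem SimpleGraph.IsAcyclic.exists_injective_adj [Finite V] (hA : A.IsAcyclic)
    (hBG : Disjoint B G) (hdeg : ∀ b ∈ B, 2 ≤ (A.neighborSet b ∩ G).ncard) :
    ∃ f : B → V, Function.Injective f ∧ ∀ b : B, A.Adj b (f b) ∧ f b ∈ G := by
  classical
  have := Fintype.ofFinite V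
  obtain ⟨f, hf, hfG⟩ := (Finset.all_card_le_biUnion_card_iff_exists_injective
    fun b : B => (A.neighborSet b ∩ G).toFinset).1 fun s => by
      rcases s.eq_empty_or_nonempty with rfl | hs
      · simp
      have hlt := hA.ncard_lt_ncard_biUnion_neighborSet_inter
        (B := (s.image Subtype.val : Finset V)) (hBG.mono_left (by simp))
        (by simpa using fun b hb _ => hdeg b hb) (by simpa using hs)
      rw [Set.ncard_coe_finset, Finset.card_image_of_injective _ Subtype.val_injective] at hlt
      refine hlt.le.trans_eq ?_
      rw [← Set.ncard_coe_finset]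
      congr 1
      ext v
      simp
  exact ⟨f, hf, fun b => by simpa using hfG b⟩

theorem IsBColoring.isMatch (h : IsBColoring A B R G) : IsMatch A R := ⟨h.1, h.2.2.2.2.2.1⟩

theorem IsBColoring.mem_or_mem_or_mem (h : IsBColoring A B R G) (v : V) :
    v ∈ B ∨ v ∈ G ∨ v ∈ Rsupp R := by
  have hv : v ∈ B ∪ G ∪ Rsupp R := h.2.1 ▸ Set.mem_univ v
  simpa only [Set.mem_union, or_assoc] using hv

theorem IsBColoring.rsupp_sdiff_edgesMeeting_subset (h : IsBColoring A B R G)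
    (hM : M ⊆ A.edgeSet) : Rsupp (M \ edgesMeeting M B) ⊆ Rsupp R := by
  rintro v ⟨e, ⟨he, hnB⟩, hve⟩
  have hB : ∀ w ∈ e, w ∉ B := fun w hw hwB => hnB ⟨he, w, hwB, hw⟩
  obtain ⟨w, rfl⟩ := Sym2.mem_iff_exists.1 hve
  rcases h.mem_or_mem_or_mem v with hv | hv | hv
  · exact (hB v hve hv).elim
  · exact (hB w (Sym2.mem_mk_right _ _) (h.2.2.2.2.2.2.1 v w (hM he) hv)).elim
  · exact hv

theorem IsBColoring.ncard_sdiff_edgesMeeting_le [Finite V] (h : IsBColoring A B R G)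
    (hM : IsMatch A M) : (M \ edgesMeeting M B).ncard ≤ R.ncard := by
  have := Set.ncard_le_ncard (h.rsupp_sdiff_edgesMeeting_subset hM.1)
  rw [(hM.mono Set.sdiff_subset).ncard_rsupp, h.isMatch.ncard_rsupp] at this
  omega

theorem IsBColoring.ncard_le [Finite V] (h : IsBColoring A B R G) (hM : IsMatch A M) :
    M.ncard ≤ B.ncard + R.ncard := by
  have := ncard_sdiff_edgesMeeting_add M B
  have := h.ncard_sdiff_edgesMeeting_le hM
  have := hM.ncard_edgesMeeting_le B
  omega

theorem IsBColoring.exists_isMatch_ncard_eq [Finite V] (hA : A.IsAcyclic)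
    (h : IsBColoring A B R G) : ∃ N, IsMatch A N ∧ N.ncard = B.ncard + R.ncard := by
  have hR := h.isMatch
  obtain ⟨-, -, hBG, hBR, hGR, -, -, hdeg⟩ := h
  obtain ⟨f, hf, hfadj⟩ := hA.exists_injective_adj hBG hdeg
  have hmk : ∀ (b : B) v, v ∈ s((b : V), f b) → v ∈ B ∪ G := by
    intro b v hv
    rcases Sym2.mem_iff.1 hv with rfl | rfl
    exacts [Or.inl b.2, Or.inr (hfadj b).2]
  have hP : IsMatch A (Set.range fun b : B => s((b : V), f b)) := by
    refine ⟨Set.range_subset_iff.2 fun b => (hfadj b).1, ?_⟩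
    rintro _ ⟨b, rfl⟩ _ ⟨b', rfl⟩ hne v ⟨hv, hv'⟩
    have hbb' : b ≠ b' := fun hbb' => hne (hbb' ▸ rfl)
    rcases Sym2.mem_iff.1 hv with rfl | rfl <;> rcases Sym2.mem_iff.1 hv' with h | h
    · exact hbb' (Subtype.ext h)
    · exact hBG.ne_of_mem b.2 (hfadj b').2 h
    · exact hBG.ne_of_mem b'.2 (hfadj b).2 h.symm
    · exact hbb' (hf h)
  have hsupp : Disjoint (Rsupp R) (Rsupp (Set.range fun b : B => s((b : V), f b))) := by
    rw [Set.disjoint_right]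
    rintro v ⟨_, ⟨b, rfl⟩, hv⟩
    rcases hmk b v hv with hvB | hvG
    exacts [hBR.notMem_of_mem_left hvB, hGR.notMem_of_mem_left hvG]
  refine ⟨R ∪ Set.range fun b : B => s((b : V), f b), hR.union hP hsupp, ?_⟩
  have hinj : Function.Injective fun b : B => s((b : V), f b) := fun b b' hbb' => by
    rcases Sym2.eq_iff.1 hbb' with ⟨h, -⟩ | ⟨h, -⟩
    exacts [Subtype.ext h, (hBG.ne_of_mem b.2 (hfadj b').2 h).elim]
  rw [Set.ncard_union_eq (disjoint_of_disjoint_rsupp hsupp), Set.ncard_range_of_injective hinj,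
    Nat.card_coe_set_eq, add_comm]

theorem IsBColoring.rsupp_sdiff_edgesMeeting_eq [Finite V] (h : IsBColoring A B R G)
    (hM : IsMatch A M) (hcard : B.ncard + R.ncard ≤ M.ncard) :
    Rsupp (M \ edgesMeeting M B) = Rsupp R := by
  refine Set.eq_of_subset_of_ncard_le (h.rsupp_sdiff_edgesMeeting_subset hM.1) ?_
  rw [(hM.mono Set.sdiff_subset).ncard_rsupp, h.isMatch.ncard_rsupp]
  have := ncard_sdiff_edgesMeeting_add M B
  have := hM.ncard_edgesMeeting_le B
  omega

theorem IsBColoring.sdiff_edgesMeeting_eq [Finite V] (hA : A.IsAcyclic) (h : IsBColoring A B R G)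
    (hM : IsMatch A M) (hcard : B.ncard + R.ncard ≤ M.ncard) : M \ edgesMeeting M B = R :=
  hA.eq_of_rsupp_eq (hM.mono Set.sdiff_subset) h.isMatch (h.rsupp_sdiff_edgesMeeting_eq hM hcard)

theorem IsBColoring.exists_mk_mem [Finite V] (h : IsBColoring A B R G) (hM : IsMatch A M)
    (hcard : B.ncard + R.ncard ≤ M.ncard) {b : V} (hb : b ∈ B) :
    ∃ g ∈ G, s(b, g) ∈ M := by
  have hMB : B.ncard ≤ (edgesMeeting M B).ncard := by
    have := ncard_sdiff_edgesMeeting_add M B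
    have := h.ncard_sdiff_edgesMeeting_le hM
    omega
  obtain ⟨e, he, hbe, hB⟩ := hM.exists_mem_of_ncard_le_ncard_edgesMeeting hMB hb
  obtain ⟨g, rfl⟩ := Sym2.mem_iff_exists.1 hbe
  refine ⟨g, ?_, he⟩
  rcases h.mem_or_mem_or_mem g with hg | hg | hg
  · exact absurd (hB g (Sym2.mem_mk_right _ _) hg) (hM.1 he).ne.symm
  · exact hg
  · rw [← h.rsupp_sdiff_edgesMeeting_eq hM hcard] at hg
    obtain ⟨f, ⟨hf, hfB⟩, hgf⟩ := hg
    rw [← hM.eq_of_mem_of_mem he hf (Sym2.mem_mk_right _ _) hgf] at hfB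
    exact (hfB ⟨he, b, hb, Sym2.mem_mk_left _ _⟩).elim

end

theorem maxMatching_of_bColoring (A : SimpleGraph V) (hA : A.IsTree)
    (B : Set V) (R : Set (Sym2 V)) (G : Set V) (hBC : IsBColoring A B R G)
    (M : Set (Sym2 V)) (hM : IsMaxMatch A M) :
    R ⊆ M ∧
    (∀ b ∈ B, ∃! e : Sym2 V, e ∈ M ∧ ∃ g ∈ G, e = s(b, g)) ∧
    (∀ e ∈ M, e ∈ R ∨ ∃ b ∈ B, ∃ g ∈ G, e = s(b, g)) ∧
    M.ncard = B.ncard + R.ncard := by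
  obtain ⟨hM, hMmax⟩ := hM
  obtain ⟨N, hN, hNcard⟩ := hBC.exists_isMatch_ncard_eq hA.isAcyclic
  have hcard : B.ncard + R.ncard ≤ M.ncard := hNcard ▸ hMmax N hN
  have hR : M \ edgesMeeting M B = R := hBC.sdiff_edgesMeeting_eq hA.isAcyclic hM hcard
  refine ⟨hR ▸ Set.sdiff_subset, fun b hb => ?_, fun e he => ?_,
    (hBC.ncard_le hM).antisymm hcard⟩
  · obtain ⟨g, hg, hbg⟩ := hBC.exists_mk_mem hM hcard hb
    refine ⟨s(b, g), ⟨hbg, g, hg, rfl⟩, ?_⟩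
    rintro _ ⟨he, g', -, rfl⟩
    exact hM.eq_of_mem_of_mem he hbg (Sym2.mem_mk_left _ _) (Sym2.mem_mk_left _ _)
  · by_cases hmeet : e ∈ edgesMeeting M B
    · obtain ⟨-, b, hb, hbe⟩ := hmeet
      obtain ⟨g, hg, hbg⟩ := hBC.exists_mk_mem hM hcard hb
      exact Or.inr ⟨b, hb, g, hg, hM.eq_of_mem_of_mem he hbg hbe (Sym2.mem_mk_left _ _)⟩
    · exact Or.inl (hR ▸ ⟨he, hmeet⟩)
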